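/- arXiv:2308.16347 — 2 statements merged into one kernel-verified Lean document; each statement's English description precedes it below -/
import Mathlib

section
/- In the blow-up setting, define r_k by r_k³ = (−λ_k/c_k²) exp(−α_k c_k²). Then for every γ < 12π², one has r_k³ e^{γ c_k²} → 0 as k → ∞ (indeed c_k² r_k³ e^{γ c_k²} remains bounded). -/
open MeasureTheory Real Filter Metric
open scoped Real ENNReal Topology NNReal

noncomputable section

abbrev E4 : Type := EuclideanSpace ℝ (Fin 4)

/-- The Laplacian of a function `u : E4 → ℝ`, defined as the trace of the second derivative. -/
def lap (u : E4 → ℝ) (x : E4) : ℝ :=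
  ∑ i : Fin 4, iteratedFDeriv ℝ 2 u x ![EuclideanSpace.single i 1, EuclideanSpace.single i 1]

/-- The directional derivative of `u` in the direction of the vector field `ν`. -/
def ndiv (ν : E4 → E4) (u : E4 → ℝ) (x : E4) : ℝ := inner ℝ (gradient u x) (ν x)

/-- A bounded domain in `ℝ⁴` with smooth boundary, together with its outward unit
normal vector field `ν`. -/
structure SmoothDomain : Type where
  Ω : Set E4
  ν : E4 → E4
  isOpen : IsOpen Ω
  nonempty : Ω.Nonempty
  bounded : Bornology.IsBounded Ω
  smooth : ∃ f : E4 → ℝ, ContDiff ℝ (⊤ : ℕ∞) f ∧ Ω = {x | f x < 0} ∧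
    ∀ x ∈ frontier Ω, gradient f x ≠ 0 ∧ ν x = ‖gradient f x‖⁻¹ • gradient f x

/-- Surface (Bochner) integral over the boundary `∂Ω`, with respect to
three-dimensional Hausdorff measure. -/
def bInt (D : SmoothDomain) (g : E4 → ℝ) : ℝ := ∫ x in frontier D.Ω, g x ∂μH[3]

/-- Surface lower integral over the boundary `∂Ω`. -/
def bLInt (D : SmoothDomain) (g : E4 → ℝ) : ℝ≥0∞ :=
  ∫⁻ x in frontier D.Ω, ENNReal.ofReal (g x) ∂μH[3]

/-- The area `|∂Ω|` of the boundary. -/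
def area (D : SmoothDomain) : ℝ := (μH[3] (frontier D.Ω)).toReal

/-- The volume `|Ω|` of the domain. -/
def vol (D : SmoothDomain) : ℝ := (volume D.Ω).toReal

/-- Membership in the class `H = {u ∈ W^{2,2}(Ω) : ‖Δu‖₂ ≤ 1, ∫_Ω u = 0, ∂u/∂ν = 0 on ∂Ω}`,
with `W^{2,2}`-regularity expressed through `C²`-smoothness on a neighbourhood of `Ω̄`. -/
def memH (D : SmoothDomain) (u : E4 → ℝ) : Prop :=
  (∃ U : Set E4, IsOpen U ∧ closure D.Ω ⊆ U ∧ ContDiffOn ℝ 2 u U) ∧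
  (∫ x in D.Ω, (lap u x) ^ 2) ≤ 1 ∧
  (∫ x in D.Ω, u x) = 0 ∧
  ∀ x ∈ frontier D.Ω, ndiv D.ν u x = 0

/-- `u` is not identically zero on `Ω`. -/
def nonzeroOn (D : SmoothDomain) (u : E4 → ℝ) : Prop := ¬ Set.EqOn u 0 D.Ω

/-- The blow-up setting: an increasing sequence `α_k ↗ 12π²` of subcritical exponents together
with smooth maximizers `u_k ∈ H` of `I_{α_k}` satisfying the Euler–Lagrange system with
multipliers `λ_k, γ_k`, maximum points `x_k` with `c_k = u_k(x_k) = max_Ω |u_k| → +∞`. -/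
structure Blowup (D : SmoothDomain) : Type where
  α : ℕ → ℝ
  u : ℕ → E4 → ℝ
  lam : ℕ → ℝ
  gam : ℕ → ℝ
  c : ℕ → ℝ
  xk : ℕ → E4
  α_mono : StrictMono α
  α_lt : ∀ k, α k < 12 * π ^ 2
  α_lim : Filter.Tendsto α Filter.atTop (nhds (12 * π ^ 2))
  mem : ∀ k, memH D (u k)
  smooth : ∀ k, ContDiffOn ℝ (⊤ : ℕ∞) (u k) D.Ω
  max : ∀ k, ∀ v : E4 → ℝ, memH D v →
    bInt D (fun x => Real.exp (α k * (v x) ^ 2)) ≤ bInt D (fun x => Real.exp (α k * (u k x) ^ 2))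
  lam_def : ∀ k, lam k = -bInt D (fun x => (u k x) ^ 2 * Real.exp (α k * (u k x) ^ 2))
  gam_def : ∀ k, gam k = (lam k * vol D)⁻¹ * bInt D (fun x => u k x * Real.exp (α k * (u k x) ^ 2))
  el_interior : ∀ k, ∀ x ∈ D.Ω, lap (lap (u k)) x = gam k
  el_boundary : ∀ k, ∀ x ∈ frontier D.Ω,
    ndiv D.ν (lap (u k)) x = u k x * Real.exp (α k * (u k x) ^ 2) / lam k
  energy : ∀ k, (∫ x in D.Ω, (lap (u k) x) ^ 2) = 1
  xk_mem : ∀ k, xk k ∈ closure D.Ω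
  c_def : ∀ k, c k = u k (xk k)
  c_max : ∀ k, ∀ x ∈ closure D.Ω, |u k x| ≤ c k
  c_blowup : Filter.Tendsto c Filter.atTop Filter.atTop

/-- The blow-up scale `r_k`, defined by `r_k³ = (−λ_k/c_k²) exp(−α_k c_k²)`. -/
def rk {D : SmoothDomain} (B : Blowup D) (k : ℕ) : ℝ :=
  ((-B.lam k / (B.c k) ^ 2) * Real.exp (-(B.α k) * (B.c k) ^ 2)) ^ ((1 : ℝ) / 3)

/-!
Choose `γ < γ' < 12π²` and an index `j` with `α_j > γ'`. For every `k` the rescaled function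
`√(γ'/α_j) u_k` lies in `H`, so the maximality of `u_j` bounds `∫_{∂Ω} e^{γ' u_k²} dσ` by a
constant `M` independent of `k`. As `|u_k| ≤ c_k` on `∂Ω`,
`-λ_k = ∫_{∂Ω} u_k² e^{α_k u_k²} dσ ≤ M c_k² e^{(α_k - γ') c_k²}`, hence
`c_k² r_k³ e^{γ c_k²} = -λ_k e^{(γ - α_k) c_k²} ≤ M c_k² e^{-(γ' - γ) c_k²} → 0`.

The comparison of surface integrals needs integrability, i.e. `μH[3] ∂Ω < ∞`: the boundary is a
compact regular level set of a smooth function, locally a Lipschitz graph over a hyperplane.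
-/

open scoped InnerProductSpace

theorem hausdorffMeasure_le_mul_hausdorffMeasure_image {X Y : Type*} [MetricSpace X]
    [MeasurableSpace X] [BorelSpace X] [MetricSpace Y] [MeasurableSpace Y] [BorelSpace Y]
    {f : X → Y} {s : Set X} {K : ℝ≥0} (hf : ∀ x ∈ s, ∀ y ∈ s, dist x y ≤ K * dist (f x) (f y))
    {d : ℝ} (hd : 0 ≤ d) : μH[d] s ≤ (K : ℝ≥0∞) ^ d * μH[d] (f '' s) := by
  have hanti : AntilipschitzWith K (fun x : s => f x) :=
    AntilipschitzWith.of_le_mul_dist fun x y => hf x x.2 y y.2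
  have h := hanti.le_hausdorffMeasure_image hd Set.univ
  rwa [← isometry_subtype_coe.hausdorffMeasure_image (Or.inl hd), Set.image_univ,
    Subtype.range_coe, Set.image_univ, Set.range_comp' f Subtype.val, Subtype.range_coe] at h

theorem hausdorffMeasure_finrank_lt_top_of_isBounded {E : Type*} [NormedAddCommGroup E]
    [NormedSpace ℝ E] [FiniteDimensional ℝ E] [MeasurableSpace E] [BorelSpace E] {s : Set E}
    (hs : Bornology.IsBounded s) : μH[Module.finrank ℝ E] s < ⊤ := by
  have h := hs.measure_lt_top (μ := μHE[Module.finrank ℝ E])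
  rw [Measure.euclideanHausdorffMeasure_def, Measure.smul_apply, ENNReal.smul_def,
    smul_eq_mul] at h
  exact ENNReal.lt_top_of_mul_ne_top_right h.ne
    (by simp [Measure.addHaarScalarFactor_volume_hausdorffMeasure_ne_zero])

section LevelSet

variable {E : Type*} [NormedAddCommGroup E] [InnerProductSpace ℝ E]

theorem norm_le_two_mul_norm_orthogonalProjectionOnto_orthogonal {g v : E}
    (h : |⟪g, v⟫_ℝ| ≤ ‖g‖ / 2 * ‖v‖) :
    ‖v‖ ≤ 2 * ‖(ℝ ∙ g)ᗮ.orthogonalProjectionOnto v‖ := by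
  have hpar : ‖(ℝ ∙ g).orthogonalProjectionOnto v‖ ≤ ‖v‖ / 2 := by
    rcases eq_or_ne g 0 with rfl | hg
    · simpa using by positivity
    have hg' := norm_pos_iff.2 hg
    change ‖((ℝ ∙ g).orthogonalProjectionOnto v : E)‖ ≤ _
    rw [← Submodule.starProjection_apply, Submodule.starProjection_singleton, norm_smul]
    simp only [Real.norm_eq_abs, RCLike.ofReal_real_eq_id, id, abs_div, abs_pow, abs_norm]
    rw [div_mul_eq_mul_div, div_le_iff₀ (by positivity)]
    nlinarith
  nlinarith [Submodule.norm_sq_eq_add_norm_sq_projection v (ℝ ∙ g),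
    norm_nonneg ((ℝ ∙ g).orthogonalProjectionOnto v), norm_nonneg v,
    norm_nonneg ((ℝ ∙ g)ᗮ.orthogonalProjectionOnto v)]

/-- Near a regular point `p`, a level set of a `C¹` function is a Lipschitz graph over the
tangent hyperplane `(∇f p)ᗮ`. -/
theorem exists_norm_sub_le_two_mul_norm_orthogonalProjectionOnto [CompleteSpace E] {f : E → ℝ}
    (hf : ContDiff ℝ 1 f) {p : E} (hp : gradient f p ≠ 0) :
    ∃ r > 0, ∀ x ∈ closedBall p r, ∀ y ∈ closedBall p r, f x = f y →
      ‖x - y‖ ≤ 2 * ‖(ℝ ∙ gradient f p)ᗮ.orthogonalProjectionOnto (x - y)‖ := by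
  set g := gradient f p
  have hfderiv : fderiv ℝ f p = InnerProductSpace.toDual ℝ E g := toDual_gradient.symm
  obtain ⟨ε, hε, hball⟩ := Metric.continuousAt_iff.1
    ((hf.continuous_fderiv one_ne_zero).continuousAt (x := p)) (ε := ‖g‖ / 2) (by positivity)
  have hnear : ∀ z ∈ closedBall p (ε / 2), ‖fderiv ℝ f z - fderiv ℝ f p‖ ≤ ‖g‖ / 2 :=
    fun z hz => by
      rw [← dist_eq_norm]
      exact (hball ((mem_closedBall.1 hz).trans_lt (half_lt_self hε))).le
  refine ⟨ε / 2, by positivity, fun x hx y hy hxy => ?_⟩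
  apply norm_le_two_mul_norm_orthogonalProjectionOnto_orthogonal
  have hmvt := (convex_closedBall p (ε / 2)).norm_image_sub_le_of_norm_fderiv_le'
    (fun z _ => hf.differentiable one_ne_zero z) hnear hy hx
  rwa [hxy, sub_self, zero_sub, norm_neg, hfderiv, InnerProductSpace.toDual_apply_apply,
    Real.norm_eq_abs] at hmvt

theorem hausdorffMeasure_lt_top_of_isCompact_of_gradient_ne_zero [FiniteDimensional ℝ E]
    [MeasurableSpace E] [BorelSpace E] {n : ℕ} (hn : Module.finrank ℝ E = n + 1) {f : E → ℝ}
    (hf : ContDiff ℝ 1 f) {K : Set E} (hK : IsCompact K) (hKf : K ⊆ f ⁻¹' {0})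
    (hg : ∀ x ∈ K, gradient f x ≠ 0) : μH[n] K < ⊤ := by
  refine hK.measure_lt_top_of_nhdsWithin fun p hp => ?_
  obtain ⟨r, hr, hproj⟩ := exists_norm_sub_le_two_mul_norm_orthogonalProjectionOnto hf (hg p hp)
  set W := (ℝ ∙ gradient f p)ᗮ
  have : Fact (Module.finrank ℝ E = n + 1) := ⟨hn⟩
  have hW : Module.finrank ℝ W = n := Submodule.finrank_orthogonal_span_singleton (hg p hp)
  refine ⟨K ∩ closedBall p r, inter_mem_nhdsWithin _ (closedBall_mem_nhds p hr), ?_⟩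
  calc μH[n] (K ∩ closedBall p r)
      ≤ (2 : ℝ≥0) ^ (n : ℝ) * μH[n] (W.orthogonalProjectionOnto '' (K ∩ closedBall p r)) := by
        refine hausdorffMeasure_le_mul_hausdorffMeasure_image (fun x hx y hy => ?_) n.cast_nonneg
        rw [dist_eq_norm, dist_eq_norm, ← map_sub]
        exact hproj x hx.2 y hy.2 ((hKf hx.1).trans (hKf hy.1).symm)
    _ < ⊤ := by
        refine ENNReal.mul_lt_top (by simp) ?_
        rw [← hW]
        exact hausdorffMeasure_finrank_lt_top_of_isBounded
          (W.orthogonalProjectionOnto.lipschitz.isBounded_image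
            (isBounded_closedBall.subset Set.inter_subset_right))

end LevelSet

namespace SmoothDomain

variable (D : SmoothDomain)

theorem isCompact_frontier : IsCompact (frontier D.Ω) :=
  Metric.isCompact_of_isClosed_isBounded isClosed_frontier
    (D.bounded.closure.subset frontier_subset_closure)

theorem hausdorffMeasure_frontier_lt_top : μH[3] (frontier D.Ω) < ⊤ := by
  obtain ⟨f, hf, hΩ, hgrad⟩ := D.smooth
  have hfront : frontier D.Ω ⊆ f ⁻¹' {0} := by
    rw [hΩ]
    exact frontier_lt_subset_eq hf.continuous continuous_const
  simpa using hausdorffMeasure_lt_top_of_isCompact_of_gradient_ne_zero (n := 3)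
    finrank_euclideanSpace_fin (hf.of_le (by simp)) D.isCompact_frontier hfront
    (fun x hx => (hgrad x hx).1)

variable {D}

theorem integrableOn_frontier {g : E4 → ℝ} (hg : ContinuousOn g (frontier D.Ω)) :
    IntegrableOn g (frontier D.Ω) μH[3] :=
  hg.integrableOn_of_subset_isCompact D.isCompact_frontier D.isCompact_frontier.measurableSet
    subset_rfl D.hausdorffMeasure_frontier_lt_top.ne

theorem bInt_mono {g h : E4 → ℝ} (hg : ContinuousOn g (frontier D.Ω))
    (hh : ContinuousOn h (frontier D.Ω)) (hgh : ∀ x ∈ frontier D.Ω, g x ≤ h x) :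
    bInt D g ≤ bInt D h :=
  setIntegral_mono_on (integrableOn_frontier hg) (integrableOn_frontier hh)
    isClosed_frontier.measurableSet hgh

theorem bInt_const_mul (a : ℝ) (g : E4 → ℝ) : bInt D (fun x => a * g x) = a * bInt D g :=
  integral_const_mul a g

end SmoothDomain

theorem lap_const_mul {u : E4 → ℝ} {x : E4} (hu : ContDiffAt ℝ 2 u x) (t : ℝ) :
    lap (fun y => t * u y) x = t * lap u x := by
  simp only [lap, ← smul_eq_mul (a := t), iteratedFDeriv_const_smul_apply' hu,
    smul_apply, Finset.smul_sum]

theorem ndiv_const_mul (ν : E4 → E4) {u : E4 → ℝ} {x : E4} (hu : DifferentiableAt ℝ u x)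
    (t : ℝ) : ndiv ν (fun y => t * u y) x = t * ndiv ν u x := by
  simp only [ndiv, gradient, fderiv_const_mul hu, map_smul, real_inner_smul_left]

theorem memH.continuousOn_closure {D : SmoothDomain} {u : E4 → ℝ} (hu : memH D u) :
    ContinuousOn u (closure D.Ω) :=
  let ⟨_, _, hU, hu⟩ := hu.1
  hu.continuousOn.mono hU

theorem memH.const_mul {D : SmoothDomain} {u : E4 → ℝ} (hu : memH D u) {t : ℝ} (ht : t ^ 2 ≤ 1) :
    memH D (fun x => t * u x) := by
  obtain ⟨⟨U, hUo, hUc, hU2⟩, hlap, hmean, hneu⟩ := hu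
  have hu2 : ∀ x ∈ closure D.Ω, ContDiffAt ℝ 2 u x :=
    fun x hx => hU2.contDiffAt (hUo.mem_nhds (hUc hx))
  refine ⟨⟨U, hUo, hUc, contDiffOn_const.mul hU2⟩, ?_, ?_, fun x hx => ?_⟩
  · calc ∫ x in D.Ω, lap (fun y => t * u y) x ^ 2
        = ∫ x in D.Ω, t ^ 2 * lap u x ^ 2 :=
          setIntegral_congr_fun D.isOpen.measurableSet fun x hx => by
            rw [lap_const_mul (hu2 x (subset_closure hx))]; ring
      _ = t ^ 2 * ∫ x in D.Ω, lap u x ^ 2 := integral_const_mul _ _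
      _ ≤ 1 := by
          have : 0 ≤ ∫ x in D.Ω, lap u x ^ 2 := integral_nonneg fun x => sq_nonneg _
          nlinarith
  · rw [integral_const_mul, hmean, mul_zero]
  · rw [ndiv_const_mul _ ((hu2 x (frontier_subset_closure hx)).differentiableAt (by norm_num)),
      hneu x hx, mul_zero]

theorem sq_mul_exp_le_of_sq_le {u c α γ : ℝ} (hu : u ^ 2 ≤ c ^ 2) (hγ : γ ≤ α) :
    u ^ 2 * exp (α * u ^ 2) ≤ c ^ 2 * exp ((α - γ) * c ^ 2) * exp (γ * u ^ 2) := by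
  have hsplit : exp (α * u ^ 2) = exp ((α - γ) * u ^ 2) * exp (γ * u ^ 2) := by
    rw [← exp_add]; ring_nf
  rw [hsplit, ← mul_assoc]
  have : 0 ≤ α - γ := sub_nonneg.2 hγ
  gcongr

theorem tendsto_mul_exp_mul_of_neg {ι : Type*} {l : Filter ι} {s : ι → ℝ}
    (hs : Tendsto s l atTop) {δ : ℝ} (hδ : δ < 0) :
    Tendsto (fun k => s k * exp (δ * s k)) l (𝓝 0) := by
  have h := ((tendsto_pow_mul_exp_neg_atTop_nhds_zero 1).comp
    (hs.const_mul_atTop (neg_pos.2 hδ))).const_mul (-δ)⁻¹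
  rw [mul_zero] at h
  refine h.congr fun k => ?_
  simp only [Function.comp_apply, pow_one, neg_mul, neg_neg]
  field_simp [hδ.ne]

namespace Blowup

variable {D : SmoothDomain} (B : Blowup D)

theorem c_nonneg (k : ℕ) : 0 ≤ B.c k := by
  have h := B.c_max k (B.xk k) (B.xk_mem k)
  rw [← B.c_def k] at h
  exact (abs_nonneg _).trans h

theorem neg_lam_nonneg (k : ℕ) : 0 ≤ -B.lam k := by
  rw [B.lam_def k, neg_neg]
  exact integral_nonneg fun x => by positivity

theorem rk_pow_three (k : ℕ) :
    rk B k ^ 3 = (-B.lam k / B.c k ^ 2) * exp (-B.α k * B.c k ^ 2) := by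
  have h : 0 ≤ (-B.lam k / B.c k ^ 2) * exp (-B.α k * B.c k ^ 2) := by
    have := B.neg_lam_nonneg k; positivity
  rw [rk, ← rpow_natCast, ← rpow_mul h]
  norm_num

theorem rk_pow_three_nonneg (k : ℕ) : 0 ≤ rk B k ^ 3 := by
  rw [rk_pow_three]
  have := B.neg_lam_nonneg k
  positivity

theorem u_sq_le_c_sq (k : ℕ) {x : E4} (hx : x ∈ closure D.Ω) : B.u k x ^ 2 ≤ B.c k ^ 2 :=
  sq_le_sq' (abs_le.1 (B.c_max k x hx)).1 (abs_le.1 (B.c_max k x hx)).2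

theorem exists_bInt_exp_le {γ : ℝ} (hγ0 : 0 ≤ γ) (hγ : γ < 12 * π ^ 2) :
    ∃ M, ∀ k, bInt D (fun x => exp (γ * B.u k x ^ 2)) ≤ M := by
  obtain ⟨j, hj⟩ := (B.α_lim.eventually (eventually_gt_nhds hγ)).exists
  have hαj : 0 < B.α j := hγ0.trans_lt hj
  have ht : sqrt (γ / B.α j) ^ 2 = γ / B.α j := sq_sqrt (by positivity)
  refine ⟨bInt D (fun x => exp (B.α j * B.u j x ^ 2)), fun k => ?_⟩
  have hmax := B.max j _ ((B.mem k).const_mul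
    (ht.trans_le ((div_le_one hαj).2 hj.le)))
  simp only [mul_pow, ht] at hmax
  convert hmax using 4 with x
  field_simp

theorem neg_lam_le {γ : ℝ} {k : ℕ} (hγ : γ ≤ B.α k) :
    -B.lam k ≤ B.c k ^ 2 * exp ((B.α k - γ) * B.c k ^ 2) *
      bInt D (fun x => exp (γ * B.u k x ^ 2)) := by
  have hu := ((B.mem k).continuousOn_closure).mono frontier_subset_closure
  rw [B.lam_def k, neg_neg, ← SmoothDomain.bInt_const_mul]
  refine SmoothDomain.bInt_mono (by fun_prop) (by fun_prop) fun x hx =>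
    sq_mul_exp_le_of_sq_le (B.u_sq_le_c_sq k (frontier_subset_closure hx)) hγ

theorem sq_mul_rk_pow_three_mul_exp {k : ℕ} (hk : B.c k ≠ 0) (γ : ℝ) :
    B.c k ^ 2 * rk B k ^ 3 * exp (γ * B.c k ^ 2) = -B.lam k * exp ((γ - B.α k) * B.c k ^ 2) := by
  rw [rk_pow_three, sub_mul, sub_eq_add_neg, exp_add, ← neg_mul]
  field_simp

theorem tendsto_sq_mul_rk_pow_three_mul_exp {γ : ℝ} (hγ : γ < 12 * π ^ 2) :
    Tendsto (fun k => B.c k ^ 2 * rk B k ^ 3 * exp (γ * B.c k ^ 2)) atTop (𝓝 0) := by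
  obtain ⟨γ', hγγ', hγ'⟩ := exists_between (max_lt hγ (by positivity : (0 : ℝ) < 12 * π ^ 2))
  obtain ⟨M, hM⟩ := B.exists_bInt_exp_le ((le_max_right _ _).trans hγγ'.le) hγ'
  have hbound := (tendsto_mul_exp_mul_of_neg ((tendsto_pow_atTop two_ne_zero).comp B.c_blowup)
    (sub_neg.2 ((le_max_left _ _).trans_lt hγγ'))).const_mul M
  rw [mul_zero] at hbound
  refine tendsto_of_tendsto_of_tendsto_of_le_of_le' tendsto_const_nhds hbound
    (Eventually.of_forall fun k => ?_) ?_
  · have := B.rk_pow_three_nonneg k; have := B.c_nonneg k; positivity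
  filter_upwards [B.α_lim.eventually (eventually_ge_nhds hγ'),
    B.c_blowup.eventually_gt_atTop 0] with k hαk hck
  rw [B.sq_mul_rk_pow_three_mul_exp hck.ne' γ]
  calc -B.lam k * exp ((γ - B.α k) * B.c k ^ 2)
      ≤ B.c k ^ 2 * exp ((B.α k - γ') * B.c k ^ 2) * M * exp ((γ - B.α k) * B.c k ^ 2) := by
        gcongr
        exact (B.neg_lam_le hαk).trans (by gcongr; exact hM k)
    _ = M * (B.c k ^ 2 * (exp ((B.α k - γ') * B.c k ^ 2) * exp ((γ - B.α k) * B.c k ^ 2))) := by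
        ring
    _ = M * (B.c k ^ 2 * exp ((γ - γ') * B.c k ^ 2)) := by
        rw [← exp_add]; ring_nf

end Blowup

/-- **Fast decay of the blow-up scale (Lemma 3.2).** With `r_k` defined by
`r_k³ = (−λ_k/c_k²) exp(−α_k c_k²)`, for every `γ < 12π²` one has
`r_k³ e^{γ c_k²} → 0` as `k → ∞`; indeed `c_k² r_k³ e^{γ c_k²}` remains bounded. -/
theorem rk_fast_decay (D : SmoothDomain) (B : Blowup D) :
    ∀ γ : ℝ, γ < 12 * π ^ 2 →
      Filter.Tendsto (fun k => (rk B k) ^ 3 * Real.exp (γ * (B.c k) ^ 2))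
        Filter.atTop (nhds 0) ∧
      ∃ C : ℝ, ∀ k, (B.c k) ^ 2 * (rk B k) ^ 3 * Real.exp (γ * (B.c k) ^ 2) ≤ C := by
  intro γ hγ
  have hweighted := B.tendsto_sq_mul_rk_pow_three_mul_exp hγ
  refine ⟨tendsto_of_tendsto_of_tendsto_of_le_of_le' tendsto_const_nhds hweighted
    (Eventually.of_forall fun k => ?_) ?_, ?_⟩
  · have := B.rk_pow_three_nonneg k; positivity
  · filter_upwards [B.c_blowup.eventually_ge_atTop 1] with k hk
    have := B.rk_pow_three_nonneg k
    rw [mul_assoc]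
    exact le_mul_of_one_le_left (by positivity) (one_le_pow₀ hk)
  · obtain ⟨C, hC⟩ := hweighted.bddAbove_range
    exact ⟨C, fun k => hC (Set.mem_range_self k)⟩
end
end

section
/- The explicit function ψ(x',t) = −(1/(8π²)) log((1+(π/2)^{2/3} t)² + (π/2)^{4/3}|x'|²) + (1/(2^{8/3} π^{4/3})) · t/((1+(π/2)^{2/3} t)² + (π/2)^{4/3}|x'|²) on the closed half space ℝ⁴₊ = {(x',t) : x' ∈ ℝ³, t ≥ 0} satisfies: Δ²ψ = 0 in the open half space {t > 0}; ∂ψ/∂t(x',0) = 0 for all x' ∈ ℝ³; ∂(Δψ)/∂t(x',0) = exp(24π² ψ(x',0)) for all x' ∈ ℝ³; and ψ(x',t) ≤ ψ(0,0) = 0 for all (x',t), i.e. sup ψ = ψ(0) = 0. -/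
open MeasureTheory Real Filter Metric
open scoped Real ENNReal Topology NNReal

noncomputable section

/-- The quantity `(1+(π/2)^{2/3} t)² + (π/2)^{4/3}|x'|²`, for `x = (x', t) ∈ ℝ³ × ℝ = ℝ⁴`. -/
def profileDen (x : E4) : ℝ :=
  (1 + (π / 2) ^ ((2 : ℝ) / 3) * x 3) ^ 2
    + (π / 2) ^ ((4 : ℝ) / 3) * ∑ i : Fin 3, (x (Fin.castSucc i)) ^ 2

/-- The explicit blow-up profile
`ψ(x',t) = −(1/(8π²)) log((1+(π/2)^{2/3}t)² + (π/2)^{4/3}|x'|²)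
  + (1/(2^{8/3}π^{4/3})) t/((1+(π/2)^{2/3}t)² + (π/2)^{4/3}|x'|²)`. -/
def profileFn (x : E4) : ℝ :=
  -(1 / (8 * π ^ 2)) * Real.log (profileDen x)
    + (1 / ((2 : ℝ) ^ ((8 : ℝ) / 3) * π ^ ((4 : ℝ) / 3))) * (x 3 / profileDen x)

/-! Write `t = x 3`, `e₃` for the unit normal, `a = (π/2)^{2/3}` and `c = 1/(8π²)`, so that
`32 a³ c = 1`. The denominator is `D = ‖e₃ + a x‖²` and `ψ = c (2at/D - log D)`.
The functions `(p + q t + r D)/Dⁿ` form a family closed under differentiation whose gradients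
lie in the span of `e₃ + a x` and `e₃`; computing the trace of the derivative of such a gradient
field turns every Laplacian into an identity between coefficients. This gives
`Δψ = -4a²c (2 + 2at + D)/D²`, whose Laplacian vanishes identically (the dimension being 4), and
on `t = 0` both boundary derivatives are explicit: `∂ₜψ = 0` and `∂ₜΔψ = 32a³c/D³ = e^{3ψ/c}`.
Finally `ψ ≤ 0` on `t ≥ 0` because `2at/D ≤ 1 - 1/D ≤ log D`. -/

open InnerProductSpace Laplacian

section
variable {E : Type*} [NormedAddCommGroup E] [InnerProductSpace ℝ E] [FiniteDimensional ℝ E]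

theorem laplacian_eq_trace_of_hasFDerivAt_gradient {u : E → ℝ} {V : E → E} {L : E →L[ℝ] E}
    {x : E} (hu : ∀ᶠ y in 𝓝 x, HasFDerivAt u (innerSL ℝ (V y)) y) (hV : HasFDerivAt V L x) :
    Δ u x = LinearMap.trace ℝ E L := by
  have hB : fderiv ℝ (fderiv ℝ u) x = (innerSL ℝ : E →L[ℝ] E →L[ℝ] ℝ).comp L := by
    have : fderiv ℝ u =ᶠ[𝓝 x] fun y => (innerSL ℝ : E →L[ℝ] E →L[ℝ] ℝ) (V y) :=
      hu.mono fun y hy => hy.fderiv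
    rw [this.fderiv_eq]
    exact ((innerSL ℝ : E →L[ℝ] E →L[ℝ] ℝ).hasFDerivAt.comp x hV).fderiv
  rw [laplacian_eq_iteratedFDeriv_stdOrthonormalBasis,
    LinearMap.trace_eq_sum_inner _ (stdOrthonormalBasis ℝ E)]
  refine Finset.sum_congr rfl fun i _ => ?_
  rw [iteratedFDeriv_two_apply, hB]
  simp [real_inner_comm]
end

theorem lap_eq_laplacian (u : E4 → ℝ) : lap u = Δ u := by
  rw [laplacian_eq_iteratedFDeriv_orthonormalBasis u (EuclideanSpace.basisFun (Fin 4) ℝ)]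
  ext x
  simp [lap, EuclideanSpace.basisFun_apply]

namespace LiouvilleProfile

open scoped RealInnerProductSpace

local notation "e₃" => (EuclideanSpace.single 3 1 : E4)

variable (a : ℝ)

def den (x : E4) : ℝ := ‖e₃ + a • x‖ ^ 2

def frac (p q r : ℝ) (n : ℕ) (x : E4) : ℝ := (p + q * x 3 + r * den a x) / den a x ^ n

lemma inner_e3 (v : E4) : ⟪v, e₃⟫ = v 3 := by
  simp [EuclideanSpace.inner_single_right]

lemma inner_e3_left (v : E4) : ⟪e₃, v⟫ = v 3 := by
  simp [EuclideanSpace.inner_single_left]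

lemma inner_shift_e3 (x : E4) : ⟪e₃ + a • x, e₃⟫ = 1 + a * x 3 := by
  rw [inner_add_left, real_inner_smul_left, inner_e3, inner_e3]
  simp

lemma inner_frame_e3 (x : E4) (α β : ℝ) :
    ⟪α • (e₃ + a • x) + β • e₃, e₃⟫ = α * (1 + a * x 3) + β := by
  rw [inner_add_left, real_inner_smul_left, real_inner_smul_left, inner_shift_e3, inner_e3]
  simp

lemma den_eq (x : E4) :
    den a x = (1 + a * x 3) ^ 2 + a ^ 2 * ∑ i : Fin 3, x (Fin.castSucc i) ^ 2 := by
  simp only [den, EuclideanSpace.real_norm_sq_eq, PiLp.add_apply, PiLp.single_apply,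
    PiLp.smul_apply, smul_eq_mul, Fin.sum_univ_four, Fin.reduceEq, ↓reduceIte, zero_add,
    Fin.sum_univ_three, Fin.castSucc_zero, Fin.castSucc_one, Fin.reduceCastSucc]
  ring

lemma one_le_den {x : E4} (hx : 0 ≤ a * x 3) : 1 ≤ den a x := by
  rw [den_eq]
  nlinarith [show 0 ≤ a ^ 2 * ∑ i : Fin 3, x (Fin.castSucc i) ^ 2 by positivity]

lemma den_pos {x : E4} (hx : 0 ≤ a * x 3) : 0 < den a x :=
  one_pos.trans_le (one_le_den a hx)

lemma den_eq_norm_sq (x : E4) : den a x = 1 + 2 * a * x 3 + a ^ 2 * ‖x‖ ^ 2 := by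
  rw [den, norm_add_sq_real, norm_smul, inner_smul_right, inner_e3_left, mul_pow]
  simp only [PiLp.norm_single, norm_one, one_pow, norm_eq_abs, sq_abs]
  ring

lemma den_zero : den a 0 = 1 := by simp [den]

lemma inner_frame_shift (x : E4) (α β : ℝ) :
    ⟪α • (e₃ + a • x) + β • e₃, e₃ + a • x⟫ = α * den a x + β * (1 + a * x 3) := by
  rw [inner_add_left, real_inner_smul_left, real_inner_smul_left, real_inner_self_eq_norm_sq,
    real_inner_comm, inner_shift_e3, den]

lemma hasFDerivAt_shift (x : E4) :
    HasFDerivAt (fun y => e₃ + a • y) (a • ContinuousLinearMap.id ℝ E4) x := by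
  simpa using ((hasFDerivAt_id x).const_smul a).const_add e₃

lemma hasFDerivAt_den (x : E4) : HasFDerivAt (den a) (innerSL ℝ ((2 * a) • (e₃ + a • x))) x := by
  refine (hasFDerivAt_shift a x).norm_sq.congr_fderiv ?_
  ext v
  simp only [map_add, map_smul, ContinuousLinearMap.comp_smulₛₗ, ringHom_apply,
    ContinuousLinearMap.comp_id, smul_add, add_apply, smul_apply, coe_innerSL_apply, smul_eq_mul,
    nsmul_eq_mul, Nat.cast_ofNat]
  ring

lemma continuous_den : Continuous (den a) :=
  continuous_iff_continuousAt.2 fun x => (hasFDerivAt_den a x).continuousAt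

lemma hasFDerivAt_frac (p q r : ℝ) (n : ℕ) {x : E4} (hx : den a x ≠ 0) :
    HasFDerivAt (frac a p q r (n + 1))
      (innerSL ℝ (frac a (-2 * a * (n + 1) * p) (-2 * a * (n + 1) * q) (-2 * a * n * r) (n + 2) x
          • (e₃ + a • x) + frac a q 0 0 (n + 1) x • e₃)) x := by
  have h3 : HasFDerivAt (fun y : E4 => y 3) (innerSL ℝ e₃) x :=
    (EuclideanSpace.proj (𝕜 := ℝ) (3 : Fin 4)).hasFDerivAt.congr_fderiv <| by
      ext v; simp [inner_e3_left]
  have hD := hasFDerivAt_den a x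
  have hnum := ((hasFDerivAt_const (𝕜 := ℝ) p x).add (h3.const_mul q)).add (hD.const_mul r)
  have hinv := ((hasDerivAt_inv hx).comp_hasFDerivAt x hD).pow (n + 1)
  have hfun : frac a p q r (n + 1) =
      fun y => (p + q * y 3 + r * den a y) * (den a y)⁻¹ ^ (n + 1) := by
    funext y; simp only [frac, div_eq_mul_inv, inv_pow]
  rw [hfun]
  refine (hnum.mul hinv).congr_fderiv ?_
  ext v
  simp only [Pi.add_apply, Function.comp_apply, add_tsub_cancel_right, inv_pow, nsmul_eq_mul,
    Nat.cast_add, Nat.cast_one, smul_add, map_add, map_smul, neg_smul, smul_neg, zero_add,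
    add_apply, neg_apply, smul_apply, coe_innerSL_apply, smul_eq_mul, frac, neg_mul, zero_mul,
    add_zero]
  field_simp
  ring

theorem laplacian_eq_of_hasFDerivAt {u α β : E4 → ℝ} {x : E4} {γ δ ε ζ : ℝ}
    (hu : ∀ᶠ y in 𝓝 x, HasFDerivAt u (innerSL ℝ (α y • (e₃ + a • y) + β y • e₃)) y)
    (hα : HasFDerivAt α (innerSL ℝ (γ • (e₃ + a • x) + δ • e₃)) x)
    (hβ : HasFDerivAt β (innerSL ℝ (ε • (e₃ + a • x) + ζ • e₃)) x) :
    Δ u x = 4 * a * α x + γ * den a x + (δ + ε) * (1 + a * x 3) + ζ := by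
  have hV := (hα.smul (hasFDerivAt_shift a x)).add (hβ.smul (hasFDerivAt_const e₃ x))
  rw [laplacian_eq_trace_of_hasFDerivAt_gradient hu hV]
  simp only [smul_zero, zero_add, ContinuousLinearMap.toLinearMap_add,
    ContinuousLinearMap.toLinearMap_smul, ContinuousLinearMap.coe_id,
    ContinuousLinearMap.coe_smulRight]
  rw [map_add, map_add, map_smul, map_smul, LinearMap.trace_id, LinearMap.trace_smulRight,
    LinearMap.trace_smulRight]
  simp only [ContinuousLinearMap.coe_coe, coe_innerSL_apply, inner_frame_shift, inner_frame_e3,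
    finrank_euclideanSpace, Fintype.card_fin, smul_eq_mul]
  ring

lemma eventually_den_ne {x : E4} (hx : den a x ≠ 0) : ∀ᶠ y in 𝓝 x, den a y ≠ 0 :=
  (continuous_den a).continuousAt.eventually_ne hx

theorem laplacian_frac (p q r : ℝ) (n : ℕ) {x : E4} (hx : den a x ≠ 0) :
    Δ (frac a p q r (n + 1)) x =
      frac a (4 * a * (n + 1) * (a * n * p - q)) (4 * a ^ 2 * (n + 1) * (n - 1) * q)
        (4 * a ^ 2 * n * (n - 1) * r) (n + 2) x := by
  rw [laplacian_eq_of_hasFDerivAt a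
    ((eventually_den_ne a hx).mono fun y hy => hasFDerivAt_frac a p q r n hy)
    (hasFDerivAt_frac a _ _ _ (n + 1) hx) (hasFDerivAt_frac a q 0 0 n hx)]
  simp only [frac]
  push_cast
  field_simp
  ring

def profile (c : ℝ) (x : E4) : ℝ := c * (2 * a * x 3 / den a x - Real.log (den a x))

variable (c : ℝ)

theorem hasFDerivAt_profile {x : E4} (hx : den a x ≠ 0) :
    HasFDerivAt (profile a c)
      (innerSL ℝ (frac a 0 (-4 * a ^ 2 * c) (-2 * a * c) 2 x • (e₃ + a • x)
        + frac a (2 * a * c) 0 0 1 x • e₃)) x := by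
  have hfun : profile a c = fun y => c * (2 * a * frac a 0 1 0 1 y - Real.log (den a y)) := by
    funext y; simp only [profile, frac]; ring
  rw [hfun]
  refine ((((hasFDerivAt_frac a 0 1 0 0 hx).const_mul (2 * a)).sub
    ((hasFDerivAt_den a x).log hx)).const_mul c).congr_fderiv ?_
  ext v
  simp only [frac, Nat.cast_zero, zero_add, mul_one, mul_zero, zero_mul, add_zero, smul_add,
    pow_one, one_div, map_add, map_smul, smul_apply, sub_apply, add_apply, coe_innerSL_apply,
    smul_eq_mul]
  field_simp
  ring

theorem laplacian_profile_eventuallyEq {x : E4} (hx : den a x ≠ 0) :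
    Δ (profile a c) =ᶠ[𝓝 x] frac a (-8 * a ^ 2 * c) (-8 * a ^ 3 * c) (-4 * a ^ 2 * c) 2 := by
  filter_upwards [eventually_den_ne a hx] with y hy
  rw [laplacian_eq_of_hasFDerivAt a
    ((eventually_den_ne a hy).mono fun z hz => hasFDerivAt_profile a c hz)
    (hasFDerivAt_frac a _ _ _ 1 hy) (hasFDerivAt_frac a _ 0 0 0 hy)]
  simp only [frac]
  push_cast
  field_simp
  ring

theorem laplacian_laplacian_profile {x : E4} (hx : den a x ≠ 0) : Δ (Δ (profile a c)) x = 0 := by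
  rw [(laplacian_congr_nhds (laplacian_profile_eventuallyEq a c hx)).eq_of_nhds,
    laplacian_frac a _ _ _ 1 hx]
  simp only [frac, Nat.cast_one]
  ring

theorem fderiv_profile_of_coord_eq_zero {x : E4} (hx : x 3 = 0) :
    fderiv ℝ (profile a c) x e₃ = 0 := by
  have hD : den a x ≠ 0 := (den_pos a (x := x) (by simp [hx])).ne'
  rw [(hasFDerivAt_profile a c hD).fderiv, innerSL_apply_apply, inner_frame_e3]
  simp only [frac, hx]
  field_simp
  ring

-- For `c = 0` both sides vanish, so the junk value `3 / 0 = 0` does no harm.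
theorem fderiv_laplacian_profile_of_coord_eq_zero {x : E4} (hx : x 3 = 0) :
    fderiv ℝ (Δ (profile a c)) x e₃ = 32 * a ^ 3 * c * Real.exp (3 / c * profile a c x) := by
  have hD : 0 < den a x := den_pos a (by simp [hx])
  rw [(laplacian_profile_eventuallyEq a c hD.ne').fderiv_eq,
    (hasFDerivAt_frac a _ _ _ 1 hD.ne').fderiv]
  rcases eq_or_ne c 0 with rfl | hc
  · simp [frac]
  have hexp : Real.exp (3 / c * profile a c x) = (den a x ^ 3)⁻¹ := by
    have h : 3 / c * profile a c x = -Real.log (den a x ^ 3) := by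
      rw [profile, hx, Real.log_pow]; field_simp; ring
    rw [h, Real.exp_neg, Real.exp_log (by positivity)]
  rw [hexp, innerSL_apply_apply, inner_frame_e3]
  simp only [frac, hx]
  field_simp
  ring

theorem profile_nonpos (hc : 0 ≤ c) {x : E4} (hx : 0 ≤ a * x 3) : profile a c x ≤ 0 := by
  have hD := den_pos a hx
  have hnum : 2 * a * x 3 ≤ den a x - 1 := by
    rw [den_eq_norm_sq]; nlinarith [sq_nonneg (a * ‖x‖)]
  have hfrac : 2 * a * x 3 / den a x ≤ 1 - (den a x)⁻¹ :=
    calc 2 * a * x 3 / den a x ≤ (den a x - 1) / den a x := by gcongr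
      _ = 1 - (den a x)⁻¹ := by field_simp
  exact mul_nonpos_of_nonneg_of_nonpos hc
    (sub_nonpos.2 (hfrac.trans (Real.one_sub_inv_le_log_of_pos hD)))

theorem profile_zero : profile a c 0 = 0 := by simp [profile, den_zero]

end LiouvilleProfile

open LiouvilleProfile

local notation "a₀" => ((π / 2) ^ ((2 : ℝ) / 3))

lemma sq_rpow_two_thirds : a₀ ^ 2 = (π / 2) ^ ((4 : ℝ) / 3) := by
  rw [← Real.rpow_natCast, ← Real.rpow_mul (by positivity)]
  norm_num

lemma cube_rpow_two_thirds : a₀ ^ 3 = π ^ 2 / 4 := by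
  rw [← Real.rpow_natCast, ← Real.rpow_mul (by positivity)]
  norm_num [div_pow]

lemma profileDen_eq_den : profileDen = den a₀ :=
  funext fun x => by rw [profileDen, den_eq, sq_rpow_two_thirds]

lemma two_rpow_mul_pi_rpow : (2 : ℝ) ^ ((8 : ℝ) / 3) * π ^ ((4 : ℝ) / 3) = 16 * a₀ ^ 2 := by
  have h : (2 : ℝ) ^ ((8 : ℝ) / 3) * (2 : ℝ) ^ ((4 : ℝ) / 3) = 16 := by
    rw [← Real.rpow_add two_pos]; norm_num
  rw [sq_rpow_two_thirds, Real.div_rpow (by positivity) zero_le_two]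
  field_simp
  linear_combination h

lemma profileFn_eq_profile : profileFn = profile a₀ (1 / (8 * π ^ 2)) := by
  funext x
  have h := cube_rpow_two_thirds
  rw [profileFn, profile, two_rpow_mul_pi_rpow, ← profileDen_eq_den]
  field_simp
  linear_combination (-32 * x 3 / profileDen x) * h

/-- **The explicit blow-up profile solves the Liouville boundary value problem.**
On the closed half space `ℝ⁴₊ = {(x',t) : t ≥ 0}` the function `ψ = profileFn` satisfies
`Δ²ψ = 0` in `{t > 0}`; `∂ψ/∂t = 0` on `{t = 0}`; `∂(Δψ)/∂t = exp(24π²ψ)` on `{t = 0}`;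
and `ψ(x',t) ≤ ψ(0) = 0` for all `(x',t)` with `t ≥ 0`. -/
theorem profile_solves_liouville :
    (∀ x : E4, 0 < x 3 → lap (lap profileFn) x = 0) ∧
    (∀ x : E4, x 3 = 0 → fderiv ℝ profileFn x (EuclideanSpace.single 3 1) = 0) ∧
    (∀ x : E4, x 3 = 0 →
      fderiv ℝ (lap profileFn) x (EuclideanSpace.single 3 1)
        = Real.exp (24 * π ^ 2 * profileFn x)) ∧
    (∀ x : E4, 0 ≤ x 3 → profileFn x ≤ 0) ∧
    profileFn 0 = 0 := by
  have hc : 0 ≤ 1 / (8 * π ^ 2) := by positivity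
  rw [lap_eq_laplacian, lap_eq_laplacian, profileFn_eq_profile]
  refine ⟨fun x hx => laplacian_laplacian_profile _ _ (den_pos _ (by positivity)).ne',
    fun x hx => fderiv_profile_of_coord_eq_zero _ _ hx, fun x hx => ?_,
    fun x hx => profile_nonpos _ _ hc (by positivity), profile_zero _ _⟩
  rw [fderiv_laplacian_profile_of_coord_eq_zero _ _ hx, cube_rpow_two_thirds]
  field_simp
  ring_nf
end
end
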